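/- Let P(x,y;K) = xᵀAy + K·xᵀBy where x = (x², x, 1)ᵀ, y = (y², y, 1)ᵀ, and A, B are 3×3 complex matrices. Define the QRT horizontal switch r_x: (x,y) ↦ (x̄,y) with x̄ = (f₁(y) - f₂(y)x)/(f₂(y) - f₃(y)x), where (f₁,f₂,f₃)ᵀ = (Ay) × (By). Then P(x̄, y; K) = 0 whenever P(x, y; K) = 0 and the denominators involved are nonzero. In particular r_x preserves every member of the pencil. -/

import Mathlib

/-!
Write `w = (A + K B) y`, so that `P(z, y; K) = w₀ z² + w₁ z + w₂`. Since `w` lies in the span of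
`A y` and `B y`, it is orthogonal to their cross product `f`. For any quadratic whose coefficient
vector is orthogonal to `f`, the Möbius map `x ↦ (f₀ - f₁ x)/(f₁ - f₂ x)` sends roots to roots:
after clearing the denominator, the value at the image is a combination of the value at `x` and
of `w ⬝ f`.
-/

open Matrix

/-- `xvec x = (x², x, 1)`. -/
def xvec (x : ℂ) : Fin 3 → ℂ := ![x ^ 2, x, 1]

/-- The biquadratic `P(x,y;K) = xᵀ(A + K B)y` with `x = (x²,x,1)`, `y = (y²,y,1)`. -/
noncomputable def biquadratic (A B : Matrix (Fin 3) (Fin 3) ℂ) (K x y : ℂ) : ℂ :=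
  xvec x ⬝ᵥ ((A + K • B) *ᵥ xvec y)

theorem add_smul_dotProduct_cross {R : Type*} [CommRing R] (u v : Fin 3 → R) (k : R) :
    (u + k • v) ⬝ᵥ (u ⨯₃ v) = 0 := by
  rw [add_dotProduct, smul_dotProduct, dot_self_cross, dot_cross_self, smul_zero, add_zero]

theorem vecCons_sq_dotProduct {F : Type*} [CommRing F] (z : F) (w : Fin 3 → F) :
    ![z ^ 2, z, 1] ⬝ᵥ w = z ^ 2 * w 0 + z * w 1 + w 2 := by
  simp [dotProduct, Fin.sum_univ_three]

theorem vecCons_sq_dotProduct_switch_eq_zero {F : Type*} [Field F] {w f : Fin 3 → F} {x : F}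
    (horth : w ⬝ᵥ f = 0) (hden : f 1 - f 2 * x ≠ 0) (hx : ![x ^ 2, x, 1] ⬝ᵥ w = 0) :
    ![((f 0 - f 1 * x) / (f 1 - f 2 * x)) ^ 2, (f 0 - f 1 * x) / (f 1 - f 2 * x), 1] ⬝ᵥ w
      = 0 := by
  rw [vecCons_sq_dotProduct] at hx ⊢
  have horth' : w 0 * f 0 + w 1 * f 1 + w 2 * f 2 = 0 := by
    simpa [dotProduct, Fin.sum_univ_three] using horth
  field_simp [show f 1 - x * f 2 ≠ 0 by rwa [mul_comm]]
  linear_combination ((f 1 - f 2 * x) ^ 2 - f 2 * (f 0 - 2 * f 1 * x + f 2 * x ^ 2)) * hx +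
    (f 0 - 2 * f 1 * x + f 2 * x ^ 2) * horth'

theorem qrt_horizontal_switch_preserves_pencil
    (A B : Matrix (Fin 3) (Fin 3) ℂ) (K x y : ℂ)
    (f : Fin 3 → ℂ)
    (hf : f = crossProduct (A *ᵥ xvec y) (B *ᵥ xvec y))
    (hden : f 1 - f 2 * x ≠ 0)
    (hP : biquadratic A B K x y = 0) :
    biquadratic A B K ((f 0 - f 1 * x) / (f 1 - f 2 * x)) y = 0 := by
  have horth : ((A + K • B) *ᵥ xvec y) ⬝ᵥ f = 0 := by
    rw [hf, add_mulVec, smul_mulVec]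
    exact add_smul_dotProduct_cross _ _ K
  exact vecCons_sq_dotProduct_switch_eq_zero horth hden hP
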